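/- With κ as in the Hamming-ball construction (κ(y,x_n)=0 if x_n=0, κ(y,x_n)=1 iff exactly one coordinate of y differs from u if x_n=1), m ≥ 3, n = m+1, v = (u,1): for every feature j ∈ {1,...,m}, |Sv(n)| > |Sv(j)|, while feature n is irrelevant for the instance (v, 0). -/

import Mathlib

open Finset

/-- `X` is a weak abductive explanation (weak AXp) for classifier `κ` at point `v`:
every point agreeing with `v` on `X` gets the same prediction as `v`. -/
def weakAXp {n : ℕ} (κ : (Fin n → Bool) → Bool) (v : Fin n → Bool)
    (X : Finset (Fin n)) : Prop :=
  ∀ x : Fin n → Bool, (∀ i ∈ X, x i = v i) → κ x = κ v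

/-- `X` is an AXp: a subset-minimal weak AXp. -/
def AXp {n : ℕ} (κ : (Fin n → Bool) → Bool) (v : Fin n → Bool)
    (X : Finset (Fin n)) : Prop :=
  weakAXp κ v X ∧ ∀ X' ⊂ X, ¬ weakAXp κ v X'

/-- `Y` is a weak contrastive explanation (weak CXp) for `κ` at `v`:
some point agreeing with `v` outside `Y` gets a different prediction. -/
def weakCXp {n : ℕ} (κ : (Fin n → Bool) → Bool) (v : Fin n → Bool)
    (Y : Finset (Fin n)) : Prop :=
  ∃ x : Fin n → Bool, (∀ i ∉ Y, x i = v i) ∧ κ x ≠ κ v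

/-- `Y` is a CXp: a subset-minimal weak CXp. -/
def CXp {n : ℕ} (κ : (Fin n → Bool) → Bool) (v : Fin n → Bool)
    (Y : Finset (Fin n)) : Prop :=
  weakCXp κ v Y ∧ ∀ Y' ⊂ Y, ¬ weakCXp κ v Y'

/-- A feature is relevant if it occurs in some AXp. -/
def Relevant {n : ℕ} (κ : (Fin n → Bool) → Bool) (v : Fin n → Bool) (i : Fin n) : Prop :=
  ∃ X, AXp κ v X ∧ i ∈ X

/-- A feature is irrelevant if it occurs in no AXp. -/
def Irrelevant {n : ℕ} (κ : (Fin n → Bool) → Bool) (v : Fin n → Bool) (i : Fin n) : Prop :=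
  ¬ Relevant κ v i

/-- `phi κ v S` : average value of `κ` over points agreeing with `v` on `S`
(uniform distribution). -/
noncomputable def phi {n : ℕ} (κ : (Fin n → Bool) → Bool) (v : Fin n → Bool)
    (S : Finset (Fin n)) : ℝ :=
  (1 / 2 ^ (n - S.card)) *
    ∑ x ∈ Finset.univ.filter (fun x : Fin n → Bool => ∀ i ∈ S, x i = v i),
      (if κ x then (1 : ℝ) else 0)

/-- Shapley value of feature `i` for classifier `κ` at point `v`. -/
noncomputable def Sv {n : ℕ} (κ : (Fin n → Bool) → Bool) (v : Fin n → Bool)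
    (i : Fin n) : ℝ :=
  ∑ S ∈ (Finset.univ.erase i).powerset,
    ((S.card.factorial * (n - S.card - 1).factorial : ℝ) / n.factorial) *
      (phi κ v (insert i S) - phi κ v S)

/-- Hamming-ball construction: feature `n = m+1` is irrelevant for `(v, 0)`, yet
its absolute Shapley value strictly exceeds that of every other feature. -/
lemma sum_R (m : ℕ) : ∑ j ∈ range m, (1:ℝ)/2^j = 2 - 2/2^m := by
  induction m with
  | zero => simp
  | succ n ih => rw [Finset.sum_range_succ, ih]; have : (2:ℝ)^n ≠ 0 := by positivity
                 field_simp; ring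

lemma sum_P (m : ℕ) : ∑ j ∈ range m, (j:ℝ)/2^j = 2 - (2*(m+1))/2^m := by
  induction m with
  | zero => simp
  | succ n ih => rw [Finset.sum_range_succ, ih]; have : (2:ℝ)^n ≠ 0 := by positivity
                 push_cast; field_simp; ring

lemma sum_Q (m : ℕ) : ∑ j ∈ range m, (j:ℝ)^2/2^j = 6 - (2*((m:ℝ)^2+2*m+3))/2^m := by
  induction m with
  | zero => norm_num
  | succ n ih => rw [Finset.sum_range_succ, ih]; have : (2:ℝ)^n ≠ 0 := by positivity
                 push_cast; field_simp; ring

lemma sum_powerset_card' {α : Type*} [DecidableEq α] (A : Finset α) (F : ℕ → ℝ) :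
    ∑ S ∈ A.powerset, F S.card = ∑ k ∈ range (A.card + 1), (A.card.choose k : ℝ) * F k := by
  rw [Finset.sum_powerset]
  refine Finset.sum_congr rfl fun k _ => ?_
  rw [Finset.sum_congr rfl (fun S hS => by rw [(Finset.mem_powersetCard.mp hS).2]),
    Finset.sum_const, Finset.card_powersetCard, nsmul_eq_mul]

lemma sum_A (m : ℕ) : ∑ j ∈ range (m+1), (j:ℝ)/2^(j+1) = 1 - ((m:ℝ)+2)/2^(m+1) := by
  have h : ∀ j ∈ range (m+1), (j:ℝ)/2^(j+1) = (1/2) * ((j:ℝ)/2^j) := by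
    intro j _
    rw [pow_succ]
    ring
  rw [Finset.sum_congr rfl h, ← Finset.mul_sum, sum_P]
  have h2 : (2:ℝ)^m ≠ 0 := by positivity
  push_cast
  rw [show (2:ℝ)^(m+1) = 2*2^m by ring]
  field_simp
  ring


lemma sum_B (m : ℕ) : ∑ j ∈ range m, ((j:ℝ)-1)*((2*(m:ℝ)+1)-j)/2^(j+2)
    = -1 - ((m:ℝ)^2-2)/2^(m+1) := by
  have h : ∀ j ∈ range m, ((j:ℝ)-1)*((2*(m:ℝ)+1)-j)/2^(j+2)
      = ((2*(m:ℝ)+2)/4) * ((j:ℝ)/2^j) - (1/4) * ((j:ℝ)^2/2^j) - ((2*(m:ℝ)+1)/4) * ((1:ℝ)/2^j) := by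
    intro j _
    have h1 : (2:ℝ)^(j+2) = 4 * 2^j := by rw [pow_add]; ring
    have h2 : (2:ℝ)^j ≠ 0 := by positivity
    rw [h1]
    field_simp
    ring
  rw [Finset.sum_congr rfl h, Finset.sum_sub_distrib, Finset.sum_sub_distrib,
    ← Finset.mul_sum, ← Finset.mul_sum, ← Finset.mul_sum, sum_P, sum_Q, sum_R]
  have h2 : (2:ℝ)^m ≠ 0 := by positivity
  rw [show (2:ℝ)^(m+1) = 2 * 2^m by ring]
  field_simp
  ring


lemma key_ineq (m : ℕ) (hm : 3 ≤ m) : ((m:ℝ)^2 + m - 1) < ((m:ℝ)-1)*2^m := by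
  induction m, hm using Nat.le_induction with
  | base => norm_num
  | succ n hn ih =>
    have h8 : (8:ℝ) ≤ 2^n := by
      calc (8:ℝ) = 2^3 := by norm_num
      _ ≤ 2^n := by
        apply pow_le_pow_right₀ (by norm_num) hn
    have hnR : (3:ℝ) ≤ n := by exact_mod_cast hn
    push_cast
    nlinarith [ih, sq_nonneg ((n:ℝ)-1), (by ring : (2:ℝ)^(n+1) = 2*2^n)]


section Aux
variable (m : ℕ) (u : Fin m → Bool) (κ : (Fin (m + 1) → Bool) → Bool)
  (hκ : ∀ x, κ x =
      if x (Fin.last m) then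
        decide ((Finset.univ.filter (fun i => x i.castSucc ≠ u i)).card = 1)
      else false)
  (v : Fin (m + 1) → Bool) (hv : v = Fin.snoc u true)

include hκ hv

lemma count_key (S : Finset (Fin (m+1))) :
    (univ.filter (fun x : Fin (m+1) → Bool => (∀ i ∈ S, x i = v i) ∧ κ x = true)).card
    = (univ.filter (fun i : Fin m => i.castSucc ∉ S)).card := by
  have hvlast : v (Fin.last m) = true := by rw [hv]; exact Fin.snoc_last _ _
  have hvc : ∀ i : Fin m, v i.castSucc = u i := by
    intro i; rw [hv]; exact Fin.snoc_castSucc _ _ _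
  have hne : ∀ i : Fin m, Fin.last m ≠ i.castSucc := fun i => (Fin.castSucc_lt_last i).ne'
  symm
  apply Finset.card_bij (fun i _ => Function.update v i.castSucc (!(u i)))
  · intro i hi
    simp only [mem_filter, mem_univ, true_and] at hi ⊢
    set x := Function.update v i.castSucc (!(u i)) with hx
    have hxlast : x (Fin.last m) = true := by
      rw [hx, Function.update_of_ne (hne i), hvlast]
    have hfil : (Finset.univ.filter (fun j => x j.castSucc ≠ u j)) = {i} := by
      ext j
      simp only [mem_filter, mem_univ, true_and, mem_singleton]
      constructor
      · intro hj
        by_contra hji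
        apply hj
        rw [hx, Function.update_of_ne (fun h => hji (Fin.castSucc_injective m h)), hvc]
      · intro hj; subst hj
        rw [hx, Function.update_self]
        simp
    constructor
    · intro p hp
      have : p ≠ i.castSucc := fun h => hi (h ▸ hp)
      rw [hx, Function.update_of_ne this]
    · rw [hκ, hxlast, if_pos rfl, hfil]
      simp
  · intro i₁ h₁ i₂ h₂ heq
    by_contra hne12
    have := congrFun heq i₁.castSucc
    rw [Function.update_self,
        Function.update_of_ne (fun h => hne12 (Fin.castSucc_injective m h)), hvc] at this
    exact absurd this (by simp)
  · intro x hx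
    simp only [mem_filter, mem_univ, true_and] at hx
    obtain ⟨hagree, hκx⟩ := hx
    rw [hκ] at hκx
    have hxlast : x (Fin.last m) = true := by
      by_contra h
      rw [if_neg (by simpa using h)] at hκx
      exact Bool.false_ne_true hκx
    rw [if_pos hxlast] at hκx
    have hcard : (Finset.univ.filter (fun j => x j.castSucc ≠ u j)).card = 1 := by
      simpa using hκx
    obtain ⟨i, hi⟩ := Finset.card_eq_one.mp hcard
    have hmem : ∀ j : Fin m, (x j.castSucc ≠ u j) ↔ j = i := by
      intro j
      constructor
      · intro h
        have : j ∈ Finset.univ.filter (fun j => x j.castSucc ≠ u j) := by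
          simp [h]
        rw [hi] at this; simpa using this
      · intro h
        have : j ∈ Finset.univ.filter (fun j => x j.castSucc ≠ u j) := by
          rw [hi, h]; exact mem_singleton_self i
        simpa using this
    have hiS : i.castSucc ∉ S := by
      intro hmemS
      have := hagree _ hmemS
      rw [hvc] at this
      exact ((hmem i).mpr rfl) this
    refine ⟨i, by simp [hiS], ?_⟩
    funext p
    induction p using Fin.lastCases with
    | last => rw [Function.update_of_ne (hne i), hvlast, hxlast]
    | cast q =>
      by_cases hq : q = i
      · subst hq
        rw [Function.update_self]
        have := (hmem q).mpr rfl
        revert this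
        cases u q <;> cases x q.castSucc <;> simp
      · rw [Function.update_of_ne (fun h => hq (Fin.castSucc_injective m h)), hvc]
        have h2 : ¬ x q.castSucc ≠ u q := fun hh => hq ((hmem q).mp hh)
        exact (not_not.mp h2).symm


omit hκ hv in
lemma card_mem (S : Finset (Fin (m+1))) :
    (univ.filter (fun i : Fin m => i.castSucc ∈ S)).card = (S.erase (Fin.last m)).card := by
  apply Finset.card_bij (fun i _ => i.castSucc)
  · intro i hi
    simp only [mem_filter, mem_univ, true_and] at hi
    exact Finset.mem_erase.mpr ⟨(Fin.castSucc_lt_last i).ne, hi⟩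
  · intro i₁ _ i₂ _ h; exact Fin.castSucc_injective m h
  · intro p hp
    obtain ⟨hp1, hp2⟩ := Finset.mem_erase.mp hp
    obtain ⟨q, hq⟩ := Fin.exists_castSucc_eq.mpr hp1
    exact ⟨q, by simp [hq, hp2], hq⟩

lemma phi_closed (S : Finset (Fin (m+1))) :
    phi κ v S = ((m : ℝ) - (S.erase (Fin.last m)).card) / 2 ^ (m + 1 - S.card) := by
  have hle : (S.erase (Fin.last m)).card ≤ m := by
    have h1 : S.erase (Fin.last m) ⊆ univ.erase (Fin.last m) :=
      Finset.erase_subset_erase _ (Finset.subset_univ S)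
    have h2 := Finset.card_le_card h1
    rwa [Finset.card_erase_of_mem (mem_univ _), Finset.card_univ, Fintype.card_fin,
      Nat.add_sub_cancel] at h2
  have hsum : (∑ x ∈ Finset.univ.filter (fun x : Fin (m+1) → Bool => ∀ i ∈ S, x i = v i),
      (if κ x then (1 : ℝ) else 0))
      = ((univ.filter (fun x : Fin (m+1) → Bool => (∀ i ∈ S, x i = v i) ∧ κ x = true)).card : ℝ) := by
    rw [Finset.sum_boole, Finset.filter_filter]
  have hcompl : (univ.filter (fun i : Fin m => i.castSucc ∉ S)).card
      = m - (S.erase (Fin.last m)).card := by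
    have := Finset.card_filter_add_card_filter_not
      (s := (univ : Finset (Fin m))) (p := fun i : Fin m => i.castSucc ∈ S)
    rw [Finset.card_univ, Fintype.card_fin] at this
    rw [card_mem] at this
    omega
  rw [phi, hsum, count_key m u κ hκ v hv, hcompl]
  rw [Nat.cast_sub hle]
  ring

lemma phi_notlast (S : Finset (Fin (m+1))) (hS : Fin.last m ∉ S) :
    phi κ v S = ((m : ℝ) - S.card) / 2 ^ (m + 1 - S.card) := by
  rw [phi_closed m u κ hκ v hv, Finset.erase_eq_of_notMem hS]

lemma phi_last (S : Finset (Fin (m+1))) (hS : Fin.last m ∉ S) :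
    phi κ v (insert (Fin.last m) S) = ((m : ℝ) - S.card) / 2 ^ (m - S.card) := by
  rw [phi_closed m u κ hκ v hv, Finset.erase_insert hS,
    Finset.card_insert_of_notMem hS]
  have h : m + 1 - (S.card + 1) = m - S.card := by omega
  rw [h]

lemma Sv_last : Sv κ v (Fin.last m)
    = (2^(m+1) - ((m:ℝ)+2)) / (((m:ℝ)+1) * 2^(m+1)) := by
  have hA : ((univ : Finset (Fin (m+1))).erase (Fin.last m)).card = m := by
    rw [Finset.card_erase_of_mem (mem_univ _), Finset.card_univ, Fintype.card_fin]
    omega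
  set F : ℕ → ℝ := fun k =>
    ((k.factorial : ℝ) * ((m - k).factorial : ℝ) / ((m+1).factorial : ℝ)) *
      (((m:ℝ)-k)/2^(m+1-k)) with hF
  rw [Sv]
  have key : ∀ S ∈ ((univ : Finset (Fin (m+1))).erase (Fin.last m)).powerset,
      ((S.card.factorial * ((m+1) - S.card - 1).factorial : ℝ) / (m+1).factorial) *
        (phi κ v (insert (Fin.last m) S) - phi κ v S) = F S.card := by
    intro S hS
    have hsub := Finset.mem_powerset.mp hS
    have hlS : Fin.last m ∉ S := fun h => (Finset.mem_erase.mp (hsub h)).1 rfl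
    have hcard : S.card ≤ m := by
      have := Finset.card_le_card hsub
      rw [hA] at this
      exact this
    rw [phi_notlast m u κ hκ v hv S hlS, phi_last m u κ hκ v hv S hlS]
    simp only [hF]
    have hexp : m + 1 - S.card = (m - S.card) + 1 := by omega
    have hc : (m+1) - S.card - 1 = m - S.card := by omega
    rw [hc, hexp, pow_succ]
    have h2 : (2:ℝ)^(m - S.card) ≠ 0 := by positivity
    field_simp
    ring
  rw [Finset.sum_congr rfl key, sum_powerset_card', hA]
  have h2 : ∀ k ∈ range (m+1), (m.choose k : ℝ) * F k
      = (1/((m:ℝ)+1)) * (((m:ℝ)-k)/2^(m+1-k)) := by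
    intro k hk
    have hk' : k ≤ m := by simpa [Nat.lt_succ_iff] using hk
    have h3 : (m.choose k : ℝ) * (k.factorial : ℝ) * ((m-k).factorial : ℝ)
        = (m.factorial : ℝ) := by
      exact_mod_cast congrArg (Nat.cast (R := ℝ)) (Nat.choose_mul_factorial_mul_factorial hk')
    have hC : (m.choose k : ℝ) = (m.factorial : ℝ) / ((k.factorial : ℝ) * ((m-k).factorial : ℝ)) := by
      rw [eq_div_iff (by positivity)]
      linarith [h3]
    have hfac2 : (((m+1).factorial : ℕ) : ℝ) = ((m:ℝ)+1) * (m.factorial : ℝ) := by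
      rw [Nat.factorial_succ]; push_cast; ring
    rw [hF, hC, hfac2]
    have n1 : (k.factorial : ℝ) ≠ 0 := by positivity
    have n2 : ((m-k).factorial : ℝ) ≠ 0 := by positivity
    have n3 : (m.factorial : ℝ) ≠ 0 := by positivity
    have n4 : ((m:ℝ)+1) ≠ 0 := by positivity
    field_simp
  rw [Finset.sum_congr rfl h2, ← Finset.mul_sum]
  have h4 : ∑ k ∈ range (m+1), ((m:ℝ)-k)/2^(m+1-k)
      = ∑ j ∈ range (m+1), (j:ℝ)/2^(j+1) := by
    rw [← Finset.sum_range_reflect (fun j => (j:ℝ)/2^(j+1)) (m+1)]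
    refine Finset.sum_congr rfl fun k hk => ?_
    have hk' : k ≤ m := by simpa [Nat.lt_succ_iff] using hk
    show ((m:ℝ)-k)/2^(m+1-k) = ((m+1-1-k : ℕ):ℝ)/2^((m+1-1-k)+1)
    rw [show m+1-1-k = m-k by omega, Nat.cast_sub hk', show (m-k)+1 = m+1-k by omega]
  rw [h4, sum_A]
  have h5 : ((m:ℝ)+1) * 2^(m+1) ≠ 0 := by positivity
  rw [eq_div_iff h5]
  have h6 : (2:ℝ)^(m+1) ≠ 0 := by positivity
  field_simp
  try ring

lemma Sv_other (hm : 3 ≤ m) (j : Fin (m+1)) (hj : j ≠ Fin.last m) :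
    Sv κ v j = (-(2^(m+1) + (m:ℝ)^2 - 2)) / ((m:ℝ) * ((m:ℝ)+1) * 2^(m+1)) := by
  have hmR : (3:ℝ) ≤ (m:ℝ) := by exact_mod_cast hm
  set T := (((univ : Finset (Fin (m+1))).erase j).erase (Fin.last m)) with hT
  have hlT : Fin.last m ∉ T := Finset.notMem_erase _ _
  have hlmem : Fin.last m ∈ (univ : Finset (Fin (m+1))).erase j :=
    Finset.mem_erase.mpr ⟨fun h => hj h.symm, mem_univ _⟩
  have hins : (univ : Finset (Fin (m+1))).erase j = insert (Fin.last m) T := by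
    rw [hT, Finset.insert_erase hlmem]
  have hTcard : T.card = m - 1 := by
    rw [hT, Finset.card_erase_of_mem hlmem, Finset.card_erase_of_mem (mem_univ _),
      Finset.card_univ, Fintype.card_fin]
    omega
  set F1 : ℕ → ℝ := fun k =>
    ((k.factorial : ℝ) * ((m - k).factorial : ℝ) / ((m+1).factorial : ℝ)) *
      (((m:ℝ)-k-2)/2^(m+1-k)) with hF1
  set F2 : ℕ → ℝ := fun k =>
    (((k+1).factorial : ℝ) * ((m - k - 1).factorial : ℝ) / ((m+1).factorial : ℝ)) *
      (((m:ℝ)-k-2)/2^(m-k)) with hF2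
  rw [Sv, hins, Finset.sum_powerset_insert hlT]
  -- facts about S in T.powerset
  have hfacts : ∀ S ∈ T.powerset, j ∉ S ∧ Fin.last m ∉ S ∧ S.card ≤ m - 1 := by
    intro S hS
    have hsub := Finset.mem_powerset.mp hS
    refine ⟨fun h => ?_, fun h => hlT (hsub h), ?_⟩
    · have := hsub h
      rw [hT] at this
      exact (Finset.mem_erase.mp (Finset.mem_of_mem_erase this)).1 rfl
    · have := Finset.card_le_card hsub
      rwa [hTcard] at this
  have key1 : ∀ S ∈ T.powerset,
      ((S.card.factorial * ((m+1) - S.card - 1).factorial : ℝ) / (m+1).factorial) *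
        (phi κ v (insert j S) - phi κ v S) = F1 S.card := by
    intro S hS
    obtain ⟨hjS, hlS, hcard⟩ := hfacts S hS
    have hljS : Fin.last m ∉ insert j S := by
      simp only [Finset.mem_insert]
      rintro (h | h)
      · exact hj h.symm
      · exact hlS h
    rw [phi_notlast m u κ hκ v hv S hlS, phi_notlast m u κ hκ v hv _ hljS,
      Finset.card_insert_of_notMem hjS]
    simp only [hF1]
    rw [show (m+1) - S.card - 1 = m - S.card from by omega,
      show m + 1 - (S.card + 1) = m - S.card from by omega,
      show m + 1 - S.card = (m - S.card) + 1 from by omega, pow_succ]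
    have h2 : (2:ℝ)^(m - S.card) ≠ 0 := by positivity
    push_cast
    field_simp
    ring
  have key2 : ∀ S ∈ T.powerset,
      (((insert (Fin.last m) S).card.factorial *
          ((m+1) - (insert (Fin.last m) S).card - 1).factorial : ℝ) / (m+1).factorial) *
        (phi κ v (insert j (insert (Fin.last m) S)) - phi κ v (insert (Fin.last m) S))
        = F2 S.card := by
    intro S hS
    obtain ⟨hjS, hlS, hcard⟩ := hfacts S hS
    have hljS : Fin.last m ∉ insert j S := by
      simp only [Finset.mem_insert]
      rintro (h | h)
      · exact hj h.symm
      · exact hlS h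
    rw [Finset.insert_comm, Finset.card_insert_of_notMem hlS,
      phi_last m u κ hκ v hv _ hljS, phi_last m u κ hκ v hv S hlS,
      Finset.card_insert_of_notMem hjS]
    simp only [hF2]
    rw [show (m+1) - (S.card + 1) - 1 = m - S.card - 1 from by omega,
      show m - (S.card + 1) = (m - S.card) - 1 from by omega,
      show m - S.card = (m - S.card - 1) + 1 from by omega]
    rw [pow_succ]
    have h2 : (2:ℝ)^(m - S.card - 1) ≠ 0 := by positivity
    push_cast
    field_simp
    ring
  rw [Finset.sum_congr rfl key1, Finset.sum_congr rfl key2,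
    sum_powerset_card', sum_powerset_card', hTcard,
    show (m - 1) + 1 = m from by omega, ← Finset.sum_add_distrib]
  have key3 : ∀ k ∈ range m, ((m-1).choose k : ℝ) * F1 k + ((m-1).choose k : ℝ) * F2 k
      = (1/((m:ℝ)*((m:ℝ)+1))) * (((m:ℝ)-k-2)*((m:ℝ)+k+2)/2^(m+1-k)) := by
    intro k hk
    have hk' : k ≤ m - 1 := by
      have := Finset.mem_range.mp hk
      omega
    have h3 : ((m-1).choose k : ℝ) * (k.factorial : ℝ) * (((m-1)-k).factorial : ℝ)
        = ((m-1).factorial : ℝ) := by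
      exact_mod_cast congrArg (Nat.cast (R := ℝ))
        (Nat.choose_mul_factorial_mul_factorial hk')
    have hC : ((m-1).choose k : ℝ)
        = ((m-1).factorial : ℝ) / ((k.factorial : ℝ) * (((m-1)-k).factorial : ℝ)) := by
      rw [eq_div_iff (by positivity)]
      linarith [h3]
    have hmk : (m - k).factorial = (m - k) * ((m-1)-k).factorial := by
      rw [show m - k = ((m-1)-k) + 1 from by omega, Nat.factorial_succ]
    have hk1 : (k+1).factorial = (k+1) * k.factorial := Nat.factorial_succ k
    have hmk1 : (m - k - 1).factorial = ((m-1)-k).factorial := by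
      rw [show m - k - 1 = (m-1)-k from by omega]
    have e1 : m.factorial = m * (m-1).factorial := by
      conv_lhs => rw [show m = (m-1)+1 from by omega]
      rw [Nat.factorial_succ]
      congr 1
      omega
    have hm1 : ((m+1).factorial : ℕ) = (m+1) * m * (m-1).factorial := by
      rw [Nat.factorial_succ, e1]
      ring
    simp only [hF1, hF2]
    rw [hC, hmk, hk1, hmk1, hm1]
    rw [show m + 1 - k = (m - k) + 1 from by omega, pow_succ]
    have n1 : (k.factorial : ℝ) ≠ 0 := by positivity
    have n2 : (((m-1)-k).factorial : ℝ) ≠ 0 := by positivity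
    have n3 : (((m-1)).factorial : ℝ) ≠ 0 := by positivity
    have n4 : (2:ℝ)^(m-k) ≠ 0 := by positivity
    have hc1 : ((m - k : ℕ) : ℝ) = (m:ℝ) - k := by
      rw [Nat.cast_sub (by omega)]
    push_cast [hc1]
    have nm : (m:ℝ) ≠ 0 := by linarith
    have nm1 : (m:ℝ) + 1 ≠ 0 := by linarith
    field_simp
    ring
  rw [Finset.sum_congr rfl key3, ← Finset.mul_sum]
  have h4 : ∑ k ∈ range m, (((m:ℝ)-k-2)*((m:ℝ)+k+2)/2^(m+1-k))
      = ∑ i ∈ range m, ((i:ℝ)-1)*((2*(m:ℝ)+1)-i)/2^(i+2) := by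
    rw [← Finset.sum_range_reflect (fun i => ((i:ℝ)-1)*((2*(m:ℝ)+1)-i)/2^(i+2)) m]
    refine Finset.sum_congr rfl fun k hk => ?_
    have hk' : k ≤ m - 1 := by
      have := Finset.mem_range.mp hk
      omega
    show ((m:ℝ)-k-2)*((m:ℝ)+k+2)/2^(m+1-k)
      = (((m-1-k : ℕ):ℝ)-1)*((2*(m:ℝ)+1)-((m-1-k : ℕ):ℝ))/2^((m-1-k)+2)
    rw [show (m-1-k)+2 = m+1-k from by omega]
    rw [Nat.cast_sub hk', Nat.cast_sub (by omega : 1 ≤ m)]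
    push_cast
    ring
  rw [h4, sum_B]
  have h5 : ((m:ℝ) * ((m:ℝ)+1)) * 2^(m+1) ≠ 0 := by positivity
  have h6 : (2:ℝ)^(m+1) ≠ 0 := by positivity
  have nm : (m:ℝ) ≠ 0 := by linarith
  have nm1 : (m:ℝ) + 1 ≠ 0 := by linarith
  field_simp
  try ring
lemma irrel : Irrelevant κ v (Fin.last m) := by
  rintro ⟨X, ⟨hwX, hmin⟩, hlX⟩
  apply hmin (X.erase (Fin.last m)) (Finset.erase_ssubset hlX)
  intro x hx
  have hvlast : v (Fin.last m) = true := by rw [hv]; exact Fin.snoc_last _ _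
  by_cases hxl : x (Fin.last m) = true
  · apply hwX
    intro i hi
    by_cases hil : i = Fin.last m
    · rw [hil, hxl, hvlast]
    · exact hx i (Finset.mem_erase.mpr ⟨hil, hi⟩)
  · have hκv : κ v = false := by
      rw [hκ, hvlast, if_pos rfl]
      have hfil : (univ.filter (fun i : Fin m => v i.castSucc ≠ u i)) = ∅ := by
        apply Finset.filter_eq_empty_iff.mpr
        intro i _
        simp [hv, Fin.snoc_castSucc]
      simp [hfil]
    have hκx : κ x = false := by
      rw [hκ, if_neg (by simpa using hxl)]
    rw [hκx, hκv]


end Aux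

theorem stmt14 (m : ℕ) (hm : 3 ≤ m) (u : Fin m → Bool)
    (κ : (Fin (m + 1) → Bool) → Bool)
    (hκ : ∀ x, κ x =
      if x (Fin.last m) then
        decide ((Finset.univ.filter (fun i => x i.castSucc ≠ u i)).card = 1)
      else false)
    (v : Fin (m + 1) → Bool) (hv : v = Fin.snoc u true) :
    Irrelevant κ v (Fin.last m) ∧
      ∀ j : Fin (m + 1), j ≠ Fin.last m →
        |Sv κ v j| < |Sv κ v (Fin.last m)| := by
  refine ⟨irrel m u κ hκ v hv, ?_⟩
  intro j hj
  rw [Sv_last m u κ hκ v hv, Sv_other m u κ hκ v hv hm j hj]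
  have hmR : (3:ℝ) ≤ (m:ℝ) := by exact_mod_cast hm
  have hp' : (0:ℝ) < 2^m := by positivity
  have key := key_ineq m hm
  have h2m : (2:ℝ)^(m+1) = 2 * 2^m := by ring
  have hpos : (0:ℝ) < (2^(m+1) - ((m:ℝ)+2)) / (((m:ℝ)+1) * 2^(m+1)) := by
    apply div_pos
    · rw [h2m]; nlinarith
    · positivity
  have hneg : (-(2^(m+1) + (m:ℝ)^2 - 2)) / ((m:ℝ) * ((m:ℝ)+1) * 2^(m+1)) < 0 := by
    apply div_neg_of_neg_of_pos
    · nlinarith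
    · positivity
  rw [abs_of_pos hpos, abs_of_neg hneg]
  rw [neg_div, neg_neg, div_lt_div_iff₀ (by positivity) (by positivity), h2m]
  nlinarith [mul_lt_mul_of_pos_right key
    (by positivity : (0:ℝ) < 2 * 2^m * ((m:ℝ)+1)), h2m]
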